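/- Let X be a nonempty subset of Zar(F), and set A = ⋂_{V∈X} V and J(X) = ⋂_{V∈X} 𝔪_V. Then J(X) = 0 if and only if there exists a valuation ring U in the patch closure of X such that 𝔪_U ∩ A = 0. -/

import Mathlib

open Set

/-- A subring `V` of a field `F` is a valuation ring of `F` (with quotient field `F`). -/
def IsValSubring (F : Type*) [Field F] (V : Subring F) : Prop :=
  ∀ t : F, t ≠ 0 → t ∈ V ∨ t⁻¹ ∈ V

/-- The Zariski-Riemann space of the field `F`: the set of valuation rings of `F`. -/
def Zar (F : Type*) [Field F] : Type _ := {V : Subring F // IsValSubring F V}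

/-- The patch (constructible) topology on `Zar F`, generated by the sets
`{V : x ∈ V}` and `{V : y ∉ V}` for `x, y ∈ F`. -/
instance Zar.patchTopology (F : Type*) [Field F] : TopologicalSpace (Zar F) :=
  TopologicalSpace.generateFrom
    ({S | ∃ x : F, S = {V : Zar F | x ∈ V.1}} ∪ {S | ∃ y : F, S = {V : Zar F | y ∉ V.1}})

variable {F : Type*} [Field F]

/-- The maximal ideal of a valuation ring of `F`, as a subset of `F`. -/
def mIdeal (V : Zar F) : Set F := {x : F | x ∈ V.1 ∧ (x = 0 ∨ x⁻¹ ∉ V.1)}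

/-- `A(X)`: the intersection of the valuation rings in `X`, as a subset of `F`. -/
def aSet (X : Set (Zar F)) : Set F := ⋂ V ∈ X, ((V : Zar F).1 : Set F)

/-- `A(X)` as a subring of `F`. -/
def ASub (X : Set (Zar F)) : Subring F := ⨅ V ∈ X, (V : Zar F).1

/-- `J(X)`: the intersection of the maximal ideals of the valuation rings in `X`. -/
def jSet (X : Set (Zar F)) : Set F := ⋂ V ∈ X, mIdeal V

/-- The set of limit points of `X` in the patch topology of `Zar F`. -/
def limPts (X : Set (Zar F)) : Set (Zar F) :=
  {V : Zar F | ∀ U : Set (Zar F), IsOpen U → V ∈ U → ∃ W ∈ X, W ≠ V ∧ W ∈ U}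

/-!
If `J(X) = 0`, every nonzero `a ∈ A` lies outside some `𝔪_V`, so the sets
`{V ∈ X : a⁻¹ ∈ V}` are nonempty; as `a` ranges over `A ∖ {0}` they are directed downwards
(the one for `ab` is contained in those for `a` and `b`). An ultrafilter `𝒰` containing all of
them has the patch limit `U = {t : {V : t ∈ V} ∈ 𝒰}`, a point of the patch closure of `X`
with `a⁻¹ ∈ U` for all nonzero `a ∈ A`, i.e. `𝔪_U ∩ A = 0`.
Conversely, for each `x` the set `{V : x ∈ 𝔪_V}` is patch closed, so `J(X) ⊆ 𝔪_U ∩ A` for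
every `U` in the patch closure of `X`.
-/

open Filter Topology

lemma zero_mem_mIdeal (V : Zar F) : (0 : F) ∈ mIdeal V :=
  ⟨zero_mem V.1, Or.inl rfl⟩

namespace Zar

lemma isOpen_setOf_mem (x : F) : IsOpen {V : Zar F | x ∈ V.1} :=
  TopologicalSpace.isOpen_generateFrom_of_mem (Or.inl ⟨x, rfl⟩)

lemma isOpen_setOf_notMem (x : F) : IsOpen {V : Zar F | x ∉ V.1} :=
  TopologicalSpace.isOpen_generateFrom_of_mem (Or.inr ⟨x, rfl⟩)

lemma isClosed_setOf_mem (x : F) : IsClosed {V : Zar F | x ∈ V.1} :=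
  isOpen_compl_iff.1 (isOpen_setOf_notMem x)

lemma isClosed_setOf_notMem (x : F) : IsClosed {V : Zar F | x ∉ V.1} :=
  isOpen_compl_iff.1 (by simpa only [compl_ofPred, not_not] using isOpen_setOf_mem x)

lemma isClosed_setOf_mem_mIdeal (x : F) : IsClosed {V : Zar F | x ∈ mIdeal V} := by
  rcases eq_or_ne x 0 with rfl | hx
  · convert isClosed_univ
    exact eq_univ_of_forall zero_mem_mIdeal
  · convert (isClosed_setOf_mem x).inter (isClosed_setOf_notMem x⁻¹) using 1
    ext V
    simp only [mIdeal, mem_ofPred_eq, hx, false_or, mem_inter_iff]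

def ofUltrafilter (𝒰 : Ultrafilter (Zar F)) : Zar F where
  val :=
    { carrier := {t | {V : Zar F | t ∈ V.1} ∈ 𝒰}
      one_mem' := mem_of_superset univ_mem fun V _ => one_mem V.1
      zero_mem' := mem_of_superset univ_mem fun V _ => zero_mem V.1
      mul_mem' := fun ha hb => mem_of_superset (inter_mem ha hb) fun V hV =>
        show _ ∈ V.1 from mul_mem hV.1 hV.2
      add_mem' := fun ha hb => mem_of_superset (inter_mem ha hb) fun V hV =>
        show _ ∈ V.1 from add_mem hV.1 hV.2
      neg_mem' := fun ha => mem_of_superset ha fun V hV => show _ ∈ V.1 from neg_mem hV }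
  property t ht := Ultrafilter.union_mem_iff.1 <| mem_of_superset univ_mem fun V _ => V.2 t ht

lemma mem_ofUltrafilter {𝒰 : Ultrafilter (Zar F)} {t : F} :
    t ∈ (ofUltrafilter 𝒰).1 ↔ {V : Zar F | t ∈ V.1} ∈ 𝒰 := by
  rfl

lemma ultrafilter_le_nhds_ofUltrafilter (𝒰 : Ultrafilter (Zar F)) :
    (𝒰 : Filter (Zar F)) ≤ 𝓝 (ofUltrafilter 𝒰) := by
  refine tendsto_id'.1 (TopologicalSpace.tendsto_nhds_generateFrom_iff.2 ?_)
  rintro s (⟨x, rfl⟩ | ⟨y, rfl⟩) hU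
  · exact mem_ofUltrafilter.1 hU
  · exact Ultrafilter.compl_mem_iff_notMem.2 (mt mem_ofUltrafilter.2 hU)

lemma ofUltrafilter_mem_closure {𝒰 : Ultrafilter (Zar F)} {X : Set (Zar F)} (hX : X ∈ 𝒰) :
    ofUltrafilter 𝒰 ∈ closure X :=
  mem_closure_iff_ultrafilter.2 ⟨𝒰, hX, ultrafilter_le_nhds_ofUltrafilter 𝒰⟩

end Zar

lemma Subring.inv_mem_of_mul_inv_mem {V : Subring F} {a b : F} (hb : b ∈ V) (hb0 : b ≠ 0)
    (hab : (a * b)⁻¹ ∈ V) : a⁻¹ ∈ V := by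
  simpa only [mul_inv, mul_assoc, inv_mul_cancel₀ hb0, mul_one] using mul_mem hab hb

section

variable {X : Set (Zar F)}

lemma mem_aSet {a : F} : a ∈ aSet X ↔ ∀ V ∈ X, a ∈ V.1 :=
  mem_iInter₂

lemma one_mem_aSet : (1 : F) ∈ aSet X :=
  mem_aSet.2 fun V _ => one_mem V.1

lemma zero_mem_aSet : (0 : F) ∈ aSet X :=
  mem_aSet.2 fun V _ => zero_mem V.1

lemma mul_mem_aSet {a b : F} (ha : a ∈ aSet X) (hb : b ∈ aSet X) : a * b ∈ aSet X :=
  mem_aSet.2 fun V hV => mul_mem (mem_aSet.1 ha V hV) (mem_aSet.1 hb V hV)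

lemma zero_mem_jSet : (0 : F) ∈ jSet X :=
  mem_iInter₂.2 fun V _ => zero_mem_mIdeal V

lemma jSet_subset_aSet : jSet X ⊆ aSet X :=
  fun _ hx => mem_aSet.2 fun V hV => (mem_iInter₂.1 hx V hV).1

lemma jSet_subset_mIdeal_of_mem_closure {U : Zar F} (hU : U ∈ closure X) :
    jSet X ⊆ mIdeal U :=
  fun x hx => closure_minimal (fun V hV => mem_iInter₂.1 hx V hV)
    (Zar.isClosed_setOf_mem_mIdeal x) hU

lemma exists_inv_mem_of_notMem_jSet {a : F} (ha : a ∈ aSet X) (haJ : a ∉ jSet X) :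
    ∃ V ∈ X, a⁻¹ ∈ V.1 := by
  obtain ⟨V, hV, haV⟩ : ∃ V ∈ X, a ∉ mIdeal V := by
    simpa only [jSet, mem_iInter₂, not_forall, exists_prop] using haJ
  exact ⟨V, hV, by_contra fun h => haV ⟨mem_aSet.1 ha V hV, Or.inr h⟩⟩

lemma exists_mem_closure_inv_mem (hJ : jSet X = {0}) :
    ∃ U ∈ closure X, ∀ a ∈ aSet X, a ≠ 0 → a⁻¹ ∈ U.1 := by
  let S : {a // a ∈ aSet X ∧ a ≠ 0} → Set (Zar F) := fun a => X ∩ {V | a.1⁻¹ ∈ V.1}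
  have hS_nonempty (a) : (S a).Nonempty :=
    exists_inv_mem_of_notMem_jSet a.2.1 (hJ ▸ a.2.2)
  have hS_directed : Directed (· ≥ ·) fun a => 𝓟 (S a) := by
    rintro ⟨a, ha, ha0⟩ ⟨b, hb, hb0⟩
    refine ⟨⟨a * b, mul_mem_aSet ha hb, mul_ne_zero ha0 hb0⟩, ?_, ?_⟩ <;>
      refine principal_mono.2 fun V hV => ⟨hV.1, ?_⟩
    · exact Subring.inv_mem_of_mul_inv_mem (mem_aSet.1 hb V hV.1) hb0 hV.2
    · exact Subring.inv_mem_of_mul_inv_mem (mem_aSet.1 ha V hV.1) ha0 (mul_comm a b ▸ hV.2)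
  have : Nonempty {a // a ∈ aSet X ∧ a ≠ 0} := ⟨⟨1, one_mem_aSet, one_ne_zero⟩⟩
  have := iInf_neBot_of_directed' hS_directed fun a => principal_neBot_iff.2 (hS_nonempty a)
  let 𝒰 := Ultrafilter.of (⨅ a, 𝓟 (S a))
  have hS_mem (a) : S a ∈ 𝒰 := Ultrafilter.of_le _ (mem_iInf_of_mem a (mem_principal_self _))
  refine ⟨Zar.ofUltrafilter 𝒰, Zar.ofUltrafilter_mem_closure ?_, fun a ha ha0 => ?_⟩
  · exact mem_of_superset (hS_mem ⟨1, one_mem_aSet, one_ne_zero⟩) inter_subset_left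
  · exact Zar.mem_ofUltrafilter.2 (mem_of_superset (hS_mem ⟨a, ha, ha0⟩) inter_subset_right)

end

theorem stmt4_general (X : Set (Zar F)) :
    jSet X = {0} ↔ ∃ U ∈ closure X, mIdeal U ∩ aSet X = {0} := by
  constructor
  · intro hJ
    obtain ⟨U, hU, hinv⟩ := exists_mem_closure_inv_mem hJ
    refine ⟨U, hU, subset_antisymm ?_ <|
      singleton_subset_iff.2 ⟨zero_mem_mIdeal U, zero_mem_aSet⟩⟩
    rintro a ⟨⟨-, ha0 | hainv⟩, ha⟩
    · exact ha0
    · by_contra ha0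
      exact hainv (hinv a ha ha0)
  · rintro ⟨U, hU, hUX⟩
    refine subset_antisymm ?_ (singleton_subset_iff.2 zero_mem_jSet)
    exact hUX ▸ subset_inter (jSet_subset_mIdeal_of_mem_closure hU) jSet_subset_aSet

theorem stmt4 (X : Set (Zar F)) (hX : X.Nonempty) :
    jSet X = {0} ↔ ∃ U ∈ closure X, mIdeal U ∩ aSet X = {0} :=
  stmt4_general X
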